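/- Suppose the GFT is left separable (each f_l ∈ F₁ has the form f_l(x,u) = |f_l(x,u)|·i_l(u) with i_l independent of x) and A(x) = C·B(x) for a constant multivector C. Then ℱ_{F₁,F₂}(A)(u) = Σ_{j∈{0,1}^μ} C_{c^j(F₁)}(u) · ℱ_{F₁(j),F₂}(B)(u), where F₁(j) replaces each f_l by (−1)^{j_l}·f_l and C_{c^j(F₁)}(u) is the iterated (anti)commutative decomposition of C with respect to the values i_l(u). -/

import Mathlib

/-!
Every `i_l(u)` squares to a negative real, so it is invertible and any `D` splits as
`c⁰(D) + c¹(D)`, the first part commuting and the second anticommuting with `i_l(u)`. Hence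
`exp(-s i) D = c⁰(D) exp(-s i) + c¹(D) exp(s i)`: pushing `C` leftwards through the factors
`exp(-f_μ), …, exp(-f_1)` of the left product splits it into `2^μ` terms, one per sign pattern
`j`, and integrating term by term gives the theorem.
-/

open MeasureTheory

/-- The integrand of the general geometric Fourier transform. -/
noncomputable def gftIntegrand {𝒢 : Type*} [NormedRing 𝒢] [NormedAlgebra ℝ 𝒢]
    [CompleteSpace 𝒢] {m μ κ : ℕ}
    (f1 : Fin μ → (Fin m → ℝ) → (Fin m → ℝ) → 𝒢)
    (f2 : Fin κ → (Fin m → ℝ) → (Fin m → ℝ) → 𝒢)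
    (A : (Fin m → ℝ) → 𝒢) (u x : Fin m → ℝ) : 𝒢 :=
  (List.ofFn fun l => NormedSpace.exp (-(f1 l x u))).prod * A x *
    (List.ofFn fun l => NormedSpace.exp (-(f2 l x u))).prod

/-- The general geometric Fourier transform `ℱ_{F₁,F₂}(A)(u)`. -/
noncomputable def gft {𝒢 : Type*} [NormedRing 𝒢] [NormedAlgebra ℝ 𝒢]
    [CompleteSpace 𝒢] {m μ κ : ℕ}
    (f1 : Fin μ → (Fin m → ℝ) → (Fin m → ℝ) → 𝒢)
    (f2 : Fin κ → (Fin m → ℝ) → (Fin m → ℝ) → 𝒢)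
    (A : (Fin m → ℝ) → 𝒢) (u : Fin m → ℝ) : 𝒢 :=
  ∫ x, gftIntegrand f1 f2 A u x

/-- Commuting/anticommuting projections with respect to an element `i` with inverse `iinv`:
`c⁰(C) = ½(C + i⁻¹Ci)`, `c¹(C) = ½(C − i⁻¹Ci)`. -/
noncomputable def cProjInv {𝒢 : Type*} [Ring 𝒢] [Algebra ℝ 𝒢]
    (b : Bool) (iinv i C : 𝒢) : 𝒢 :=
  if b then (2⁻¹ : ℝ) • (C - iinv * C * i) else (2⁻¹ : ℝ) • (C + iinv * C * i)

section Projections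

variable {𝒜 : Type*} [Ring 𝒜] [Algebra ℝ 𝒜] {i : 𝒜} {r : ℝ}

lemma cProjInv_false_add_cProjInv_true (iinv i C : 𝒜) :
    cProjInv false iinv i C + cProjInv true iinv i C = C := by
  simp only [cProjInv, Bool.false_eq_true, if_false, if_true]
  module

lemma mul_smul_neg_self_eq_one (hr : r ≠ 0) (hi : i * i = algebraMap ℝ 𝒜 (-r)) :
    i * (r⁻¹ • -i) = 1 := by
  rw [mul_smul_comm, mul_neg, hi, map_neg, neg_neg, Algebra.algebraMap_eq_smul_one, smul_smul,
    inv_mul_cancel₀ hr, one_smul]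

lemma smul_neg_self_mul_eq_one (hr : r ≠ 0) (hi : i * i = algebraMap ℝ 𝒜 (-r)) :
    (r⁻¹ • -i) * i = 1 := by
  rw [smul_mul_assoc, neg_mul, hi, map_neg, neg_neg, Algebra.algebraMap_eq_smul_one, smul_smul,
    inv_mul_cancel₀ hr, one_smul]

/-- `c⁰` lands in the commutant of `i`, `c¹` in its anticommutant. -/
lemma semiconjBy_cProjInv (hr : r ≠ 0) (hi : i * i = algebraMap ℝ 𝒜 (-r)) (b : Bool) (D : 𝒜) :
    SemiconjBy (cProjInv b (r⁻¹ • -i) i D) ((if b then (-1 : ℝ) else 1) • i) i := by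
  have hright : r⁻¹ • -i * D * i * i = i * D := by
    rw [mul_assoc _ i, mul_assoc, hi, ← Algebra.commutes, ← hi, ← mul_assoc, ← mul_assoc,
      smul_neg_self_mul_eq_one hr hi, one_mul]
  have hleft : i * (r⁻¹ • -i * D * i) = D * i := by
    rw [← mul_assoc, ← mul_assoc, mul_smul_neg_self_eq_one hr hi, one_mul]
  generalize r⁻¹ • -i = iinv at hright hleft
  cases b <;> simp only [SemiconjBy, cProjInv, Bool.false_eq_true, if_false, if_true, one_smul,
    neg_smul, smul_mul_assoc, mul_smul_comm, add_mul, mul_add, sub_mul, mul_sub, mul_neg,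
    hright, hleft] <;> module

end Projections

/-- The paper's `C_{c^j}`; the projection for the last index is applied first. -/
noncomputable def cProjIter {𝒜 : Type*} [Ring 𝒜] [Algebra ℝ 𝒜] {n : ℕ} (j : Fin n → Bool)
    (i : Fin n → 𝒜) (r : Fin n → ℝ) (C : 𝒜) : 𝒜 :=
  (List.finRange n).foldr (fun l acc => cProjInv (j l) ((r l)⁻¹ • (-(i l))) (i l) acc) C

lemma cProjIter_cons {𝒜 : Type*} [Ring 𝒜] [Algebra ℝ 𝒜] {n : ℕ} (b : Bool) (j : Fin n → Bool)
    (i : Fin (n + 1) → 𝒜) (r : Fin (n + 1) → ℝ) (C : 𝒜) :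
    cProjIter (Fin.cons b j) i r C =
      cProjInv b ((r 0)⁻¹ • -i 0) (i 0)
        (cProjIter j (fun l => i l.succ) (fun l => r l.succ) C) := by
  simp only [cProjIter, List.finRange_succ, List.foldr_cons, List.foldr_map, Fin.cons_zero,
    Fin.cons_succ]

lemma Fintype.sum_fin_succ_pi {M α : Type*} [AddCommMonoid M] [Fintype α] {n : ℕ}
    (F : (Fin (n + 1) → α) → M) : ∑ j, F j = ∑ a, ∑ j : Fin n → α, F (Fin.cons a j) := by
  rw [← (Fin.consEquiv fun _ => α).sum_comp F, Fintype.sum_prod_type]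
  rfl

section Exponential

variable {𝒢 : Type*} [NormedRing 𝒢] [NormedAlgebra ℝ 𝒢] [CompleteSpace 𝒢]

lemma exp_neg_smul_mul_eq_sum {i : 𝒢} {r : ℝ} (hr : r ≠ 0) (hi : i * i = algebraMap ℝ 𝒢 (-r))
    (s : ℝ) (D : 𝒢) :
    NormedSpace.exp (-(s • i)) * D =
      ∑ b : Bool, cProjInv b (r⁻¹ • -i) i D *
        NormedSpace.exp (-((if b then (-1 : ℝ) else 1) • s • i)) := by
  let +nondep : NormedAlgebra ℚ 𝒢 := .restrictScalars ℚ ℝ 𝒢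
  conv_lhs => rw [← cProjInv_false_add_cProjInv_true (r⁻¹ • -i) i D]
  rw [Fintype.sum_bool, mul_add, add_comm]
  congr 1 <;> refine (SemiconjBy.exp_right ?_).eq.symm <;> rw [smul_comm] <;>
    exact ((semiconjBy_cProjInv hr hi _ D).smul_right s).neg_right

lemma list_prod_exp_mul_eq_sum {n : ℕ} {i : Fin n → 𝒢} {r : Fin n → ℝ} (hr : ∀ l, r l ≠ 0)
    (hi : ∀ l, i l * i l = algebraMap ℝ 𝒢 (-r l)) (s : Fin n → ℝ) (C : 𝒢) :
    (List.ofFn fun l => NormedSpace.exp (-(s l • i l))).prod * C =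
      ∑ j : Fin n → Bool, cProjIter j i r C *
        (List.ofFn fun l =>
          NormedSpace.exp (-((if j l then (-1 : ℝ) else 1) • s l • i l))).prod := by
  induction n with
  | zero => simp [cProjIter]
  | succ n ih =>
    rw [List.ofFn_succ, List.prod_cons, mul_assoc, ih (fun l => hr l.succ) (fun l => hi l.succ),
      Finset.mul_sum, Fintype.sum_fin_succ_pi, Finset.sum_comm]
    refine Finset.sum_congr rfl fun j _ => ?_
    rw [← mul_assoc, exp_neg_smul_mul_eq_sum (hr 0) (hi 0), Finset.sum_mul]
    refine Finset.sum_congr rfl fun b _ => ?_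
    simp only [cProjIter_cons, List.ofFn_succ, List.prod_cons, Fin.cons_zero, Fin.cons_succ,
      mul_assoc]

end Exponential

lemma gftIntegrand_of_mul_left {𝒢 : Type*} [NormedRing 𝒢] [NormedAlgebra ℝ 𝒢] [CompleteSpace 𝒢]
    {m μ κ : ℕ} (f1 : Fin μ → (Fin m → ℝ) → (Fin m → ℝ) → 𝒢)
    (f2 : Fin κ → (Fin m → ℝ) → (Fin m → ℝ) → 𝒢) {u : Fin m → ℝ} {s : Fin μ → (Fin m → ℝ) → ℝ}
    {i : Fin μ → 𝒢} {r : Fin μ → ℝ} (hsep : ∀ l x, f1 l x u = s l x • i l) (hr : ∀ l, r l ≠ 0)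
    (hi : ∀ l, i l * i l = algebraMap ℝ 𝒢 (-r l)) (C : 𝒢) (B : (Fin m → ℝ) → 𝒢) (x : Fin m → ℝ) :
    gftIntegrand f1 f2 (fun x => C * B x) u x =
      ∑ j : Fin μ → Bool, cProjIter j i r C *
        gftIntegrand (fun l x u => (if j l then (-1 : ℝ) else 1) • f1 l x u) f2 B u x := by
  simp only [gftIntegrand, hsep]
  rw [← mul_assoc, list_prod_exp_mul_eq_sum hr hi, Finset.sum_mul, Finset.sum_mul]
  simp only [mul_assoc]

theorem gft_left_products_general {𝒢 : Type*} [NormedRing 𝒢] [NormedAlgebra ℝ 𝒢] [CompleteSpace 𝒢]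
    {m μ κ : ℕ}
    (f1 : Fin μ → (Fin m → ℝ) → (Fin m → ℝ) → 𝒢)
    (f2 : Fin κ → (Fin m → ℝ) → (Fin m → ℝ) → 𝒢)
    (s : Fin μ → (Fin m → ℝ) → (Fin m → ℝ) → ℝ)
    (i : Fin μ → (Fin m → ℝ) → 𝒢) (r : Fin μ → (Fin m → ℝ) → ℝ)
    (hsep : ∀ l x u, f1 l x u = s l x u • i l u)
    (hr : ∀ l u, 0 < r l u)
    (hi : ∀ l u, i l u * i l u = algebraMap ℝ 𝒢 (-(r l u)))
    (C : 𝒢) (A B : (Fin m → ℝ) → 𝒢) (hA : ∀ x, A x = C * B x) (u : Fin m → ℝ)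
    (hInt : ∀ j : Fin μ → Bool,
      Integrable (gftIntegrand
        (fun l x u => (if j l then (-1 : ℝ) else 1) • f1 l x u) f2 B u)) :
    gft f1 f2 A u =
      ∑ j : Fin μ → Bool,
        (((List.finRange μ).reverse).foldl
            (fun acc l => cProjInv (j l) ((r l u)⁻¹ • (-(i l u))) (i l u) acc) C) *
          gft (fun l x u => (if j l then (-1 : ℝ) else 1) • f1 l x u) f2 B u := by
  have hfold (j : Fin μ → Bool) : ((List.finRange μ).reverse).foldl
      (fun acc l => cProjInv (j l) ((r l u)⁻¹ • (-(i l u))) (i l u) acc) C =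
        cProjIter j (fun l => i l u) (fun l => r l u) C :=
    List.foldl_reverse
  obtain rfl : A = fun x => C * B x := funext hA
  simp only [gft, hfold, gftIntegrand_of_mul_left f1 f2 (fun l x => hsep l x u)
    (fun l => (hr l u).ne') (fun l => hi l u)]
  rw [integral_finsetSum _ fun j _ => (hInt j).const_mul _]
  exact Finset.sum_congr rfl fun j _ => integral_const_mul_of_integrable (hInt j)

/-- Left products theorem for a left separable GFT: if each `f_l ∈ F₁` has the form
`f_l(x,u) = |f_l(x,u)|·i_l(u)` and `A(x) = C·B(x)`, then
`ℱ_{F₁,F₂}(A)(u) = Σ_{j∈{0,1}^μ} C_{c^j(←F₁)}(u) · ℱ_{F₁(j),F₂}(B)(u)`,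
where `F₁(j)` replaces `f_l` by `(−1)^{j_l} f_l` and the projections on `C` are applied in
reversed order (first with respect to `i_μ(u)`). -/
theorem gft_left_products {𝒢 : Type*} [NormedRing 𝒢] [NormedAlgebra ℝ 𝒢] [CompleteSpace 𝒢]
    {m μ κ : ℕ}
    (f1 : Fin μ → (Fin m → ℝ) → (Fin m → ℝ) → 𝒢)
    (f2 : Fin κ → (Fin m → ℝ) → (Fin m → ℝ) → 𝒢)
    (s : Fin μ → (Fin m → ℝ) → (Fin m → ℝ) → ℝ)
    (i : Fin μ → (Fin m → ℝ) → 𝒢) (r : Fin μ → (Fin m → ℝ) → ℝ)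
    (hsep : ∀ l x u, f1 l x u = s l x u • i l u)
    (hr : ∀ l u, 0 < r l u)
    (hi : ∀ l u, i l u * i l u = algebraMap ℝ 𝒢 (-(r l u)))
    (hf2 : ∀ l x u, ∃ ρ : ℝ, 0 < ρ ∧ f2 l x u * f2 l x u = algebraMap ℝ 𝒢 (-ρ))
    (C : 𝒢) (A B : (Fin m → ℝ) → 𝒢) (hA : ∀ x, A x = C * B x) (u : Fin m → ℝ)
    (hInt : ∀ j : Fin μ → Bool,
      Integrable (gftIntegrand
        (fun l x u => (if j l then (-1 : ℝ) else 1) • f1 l x u) f2 B u)) :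
    gft f1 f2 A u =
      ∑ j : Fin μ → Bool,
        (((List.finRange μ).reverse).foldl
            (fun acc l => cProjInv (j l) ((r l u)⁻¹ • (-(i l u))) (i l u) acc) C) *
          gft (fun l x u => (if j l then (-1 : ℝ) else 1) • f1 l x u) f2 B u :=
  gft_left_products_general f1 f2 s i r hsep hr hi C A B hA u hInt
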